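/- arXiv:2401.00176 — 10 statements merged into one kernel-verified Lean document; each statement's English description precedes it below -/
import Mathlib

section
/- The polynomial identity (z^20 + 228 z^15 + 494 z^10 - 228 z^5 + 1)^3 = (z^30 - 522 z^25 - 10005 z^20 - 10005 z^10 + 522 z^5 + 1)^2 + 1728 * z^5 * (z^10 - 11 z^5 - 1)^5 holds in C[z] (or Z[z]). -/
open Polynomial

theorem dodecahedron_identity :
    ((X : ℤ[X])^20 + 228 * X^15 + 494 * X^10 - 228 * X^5 + 1)^3 =
      (X^30 - 522 * X^25 - 10005 * X^20 - 10005 * X^10 + 522 * X^5 + 1)^2 +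
        1728 * X^5 * (X^10 - 11 * X^5 - 1)^5 := by ring
end

section
/- For P = z(z^10 - 11z^5 - 1), M = z^30 - 522 z^25 - 10005 z^20 - 10005 z^10 + 522 z^5 + 1, the identity (11 * 125 / 25) M = 90 P P' P'' - 36 P^2 P''' - 55 (P')^3 holds, i.e. 55 M = 90 P P' P'' - 36 P^2 P''' - 55 (P')^3. -/
open Polynomial

section
variable {R : Type*} [CommRing R]

theorem derivative_X_mul_X_pow_ten_sub :
    derivative (X * (X ^ 10 - 11 * X ^ 5 - 1) : R[X]) = 11 * X ^ 10 - 66 * X ^ 5 - 1 := by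
  simp [C_ofNat]
  ring

theorem derivative_eleven_mul_X_pow_ten_sub :
    derivative (11 * X ^ 10 - 66 * X ^ 5 - 1 : R[X]) = 110 * X ^ 9 - 330 * X ^ 4 := by
  simp [C_ofNat]
  ring

theorem derivative_hundred_ten_mul_X_pow_nine_sub :
    derivative (110 * X ^ 9 - 330 * X ^ 4 : R[X]) = 990 * X ^ 8 - 1320 * X ^ 3 := by
  simp [C_ofNat]
  ring

end

theorem M_from_P_identity :
    let P : ℚ[X] := X * (X^10 - 11 * X^5 - 1)
    let M : ℚ[X] := X^30 - 522 * X^25 - 10005 * X^20 - 10005 * X^10 + 522 * X^5 + 1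
    55 * M = 90 * P * (derivative P) * (derivative (derivative P)) -
      36 * P^2 * (derivative (derivative (derivative P))) - 55 * (derivative P)^3 := by
  intro P M
  rw [derivative_X_mul_X_pow_ten_sub, derivative_eleven_mul_X_pow_ten_sub,
    derivative_hundred_ten_mul_X_pow_nine_sub]
  ring
end

section
/- Suppose V, M, P in C[z] are monic, pairwise coprime, squarefree polynomials with deg V = 10 + 2s, deg M = 15 + 3s, deg P = 6 + s for a positive integer s, and V^3/(k P^5) = M^2/(k P^5) + 1 (i.e. V^3 = M^2 + k P^5) for a nonzero constant k; then differentiating yields V^2 (3 V' P - 5 V P') = M (2 M' P - 5 M P'), and moreover s M = 3 V' P - 5 V P' and s V^2 = 2 M' P - 5 M P'. -/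
open Polynomial

lemma deriv_deg {p : ℂ[X]} (hp : p.Monic) {n : ℕ} (hd : p.natDegree = n + 1) :
    (derivative p).natDegree = n ∧ (derivative p).coeff n = (n+1 : ℂ) := by
  have hc : (derivative p).coeff n = (n+1 : ℂ) := by
    rw [coeff_derivative, ← hd, coeff_natDegree, hp.leadingCoeff, one_mul]
  refine ⟨le_antisymm ?_ ?_, hc⟩
  · have := natDegree_derivative_le p
    omega
  · apply le_natDegree_of_ne_zero
    rw [hc]
    exact Nat.cast_add_one_ne_zero n

theorem differential_trick (s : ℕ) (hs : 0 < s) (V M P : ℂ[X]) (k : ℂ) (hk : k ≠ 0)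
    (hVmonic : V.Monic) (hMmonic : M.Monic) (hPmonic : P.Monic)
    (hVM : IsCoprime V M) (hVP : IsCoprime V P) (hMP : IsCoprime M P)
    (hVsf : Squarefree V) (hMsf : Squarefree M) (hPsf : Squarefree P)
    (hdV : V.natDegree = 10 + 2 * s) (hdM : M.natDegree = 15 + 3 * s)
    (hdP : P.natDegree = 6 + s)
    (hid : V^3 = M^2 + C k * P^5) :
    V^2 * (3 * derivative V * P - 5 * V * derivative P) =
        M * (2 * derivative M * P - 5 * M * derivative P) ∧
      (s : ℂ[X]) * M = 3 * derivative V * P - 5 * V * derivative P ∧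
      (s : ℂ[X]) * V^2 = 2 * derivative M * P - 5 * M * derivative P := by
  have hMne : M ≠ 0 := hMmonic.ne_zero
  set Q : ℂ[X] := 3 * derivative V * P - 5 * V * derivative P with hQdef
  set R : ℂ[X] := 2 * derivative M * P - 5 * M * derivative P with hRdef
  -- derivative of the identity
  have h := congrArg derivative hid
  simp only [derivative_pow, derivative_add, derivative_mul, derivative_C, zero_mul,
    zero_add] at h
  have eq1 : V ^ 2 * Q = M * R := by
    rw [hQdef, hRdef]
    simp only [C_eq_natCast] at h
    push_cast at h ⊢
    linear_combination P * h - 5 * derivative P * hid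
  obtain ⟨hdV', hcV'⟩ := deriv_deg hVmonic (show V.natDegree = (9 + 2*s) + 1 by omega)
  obtain ⟨hdP', hcP'⟩ := deriv_deg hPmonic (show P.natDegree = (5 + s) + 1 by omega)
  have hQ : Q = C (3:ℂ) * (derivative V * P) - C (5:ℂ) * (V * derivative P) := by
    rw [hQdef]; simp only [map_ofNat]; ring
  have h1 : (derivative V * P).coeff (15 + 3*s) = ((9 + 2*s : ℕ) + 1 : ℂ) := by
    have e : 15 + 3*s = (derivative V).natDegree + P.natDegree := by rw [hdV', hdP]; omega
    rw [e, coeff_mul_degree_add_degree, leadingCoeff, hdV', hcV', hPmonic.leadingCoeff,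
      mul_one]
  have h2 : (V * derivative P).coeff (15 + 3*s) = ((5 + s : ℕ) + 1 : ℂ) := by
    have e : 15 + 3*s = V.natDegree + (derivative P).natDegree := by rw [hdP', hdV]; omega
    rw [e, coeff_mul_degree_add_degree, hVmonic.leadingCoeff, one_mul, leadingCoeff,
      hdP', hcP']
  have hQcoeff : Q.coeff (15 + 3*s) = (s : ℂ) := by
    rw [hQ, coeff_sub, coeff_C_mul, coeff_C_mul, h1, h2]
    push_cast; ring
  have hQdeg : Q.natDegree ≤ 15 + 3*s := by
    rw [hQ]
    refine (natDegree_sub_le _ _).trans (max_le ?_ ?_)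
    · exact (natDegree_C_mul_le _ _).trans (natDegree_mul_le.trans (by rw [hdV', hdP]; omega))
    · exact (natDegree_C_mul_le _ _).trans (natDegree_mul_le.trans (by rw [hdP', hdV]; omega))
  have hsC : (s : ℂ) ≠ 0 := Nat.cast_ne_zero.mpr hs.ne'
  have hQne : Q ≠ 0 := by
    intro h0
    rw [h0, coeff_zero] at hQcoeff
    exact hsC hQcoeff.symm
  have hcop : IsCoprime M (V ^ 2) := hVM.symm.pow_right
  have hdvd : M ∣ Q := hcop.dvd_of_dvd_mul_right ⟨R, by rw [← eq1]; ring⟩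
  obtain ⟨T, hT⟩ := hdvd
  have hTne : T ≠ 0 := by
    rintro rfl
    rw [mul_zero] at hT
    exact hQne hT
  have hTdeg : T.natDegree = 0 := by
    have := natDegree_mul hMne hTne
    rw [← hT, hdM] at this
    omega
  obtain ⟨t, rfl⟩ := natDegree_eq_zero.mp hTdeg
  have ht : t = (s : ℂ) := by
    have := hQcoeff
    rw [hT, coeff_mul_C, ← hdM, coeff_natDegree, hMmonic.leadingCoeff, one_mul] at this
    exact this
  have goal2 : (s : ℂ[X]) * M = Q := by
    rw [← C_eq_natCast, hT, ht]; ring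
  refine ⟨eq1, goal2, ?_⟩
  refine mul_left_cancel₀ hMne ?_
  rw [← eq1, ← goal2]
  ring
end

section
/- If P is a monic polynomial of degree m over C satisfying 22 P P'''' + 45 (P'')^2 - 66 P' P''' = 0, then m(m-1)(m-11)(m-12) = 0; in particular m is 0, 1, 11, or 12. -/
/-!
Multiply the equation by `X ^ 4` and distribute the powers of `X` so that every factor has the
form `X ^ k * P⁽ᵏ⁾`. Such a factor has degree at most `m` and coefficient `m (m-1) ⋯ (m-k+1)` at
`X ^ m`, so the coefficient of `X ^ (2m)` is `22 m⁽⁴⁾ + 45 (m⁽²⁾)² - 66 m m⁽³⁾`, which factors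
as `m (m-1) (m-11) (m-12)`. Reading off the coefficient of `X ^ (2m)` rather than that of
`X ^ (2m-4)` in the original equation keeps degrees `m < 4` from being special cases.
-/

open Polynomial

theorem Nat.cast_descFactorial_combination {R : Type*} [CommRing R] (n : ℕ) :
    (22 * n.descFactorial 4 + 45 * n.descFactorial 2 ^ 2 - 66 * n * n.descFactorial 3 : R) =
      n * (n - 1) * (n - 11) * (n - 12) := by
  simp only [← descPochhammer_eval_eq_descFactorial, descPochhammer_succ_eval, descPochhammer_zero,
    eval_one]
  push_cast
  ring

namespace Polynomial

section Semiring

variable {R : Type*} [Semiring R]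

theorem natDegree_X_pow_mul_iterate_derivative_le (p : R[X]) (k : ℕ) :
    (X ^ k * derivative^[k] p).natDegree ≤ p.natDegree := by
  rcases lt_or_ge p.natDegree k with hk | hk
  · simp [iterate_derivative_eq_zero hk]
  · calc (X ^ k * derivative^[k] p).natDegree
        ≤ (X ^ k : R[X]).natDegree + (derivative^[k] p).natDegree := natDegree_mul_le
      _ ≤ k + (p.natDegree - k) :=
          add_le_add (natDegree_X_pow_le k) (natDegree_iterate_derivative p k)
      _ = p.natDegree := by omega

theorem coeff_X_pow_mul_iterate_derivative_natDegree (p : R[X]) (k : ℕ) :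
    (X ^ k * derivative^[k] p).coeff p.natDegree = p.natDegree.descFactorial k • p.leadingCoeff := by
  rw [coeff_X_pow_mul', coeff_iterate_derivative]
  split_ifs with hk
  · rw [Nat.sub_add_cancel hk, leadingCoeff]
  · rw [Nat.descFactorial_eq_zero_iff_lt.mpr (not_le.mp hk), zero_smul]

end Semiring

theorem coeff_two_mul_natDegree_X_pow_mul_iterate_derivative_mul {R : Type*} [CommSemiring R]
    (p : R[X]) (i j : ℕ) :
    ((X ^ i * derivative^[i] p) * (X ^ j * derivative^[j] p)).coeff (2 * p.natDegree) =
      (p.natDegree.descFactorial i * p.natDegree.descFactorial j : R) * p.leadingCoeff ^ 2 := by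
  rw [two_mul, coeff_mul_add_eq_of_natDegree_le (natDegree_X_pow_mul_iterate_derivative_le p i)
    (natDegree_X_pow_mul_iterate_derivative_le p j), coeff_X_pow_mul_iterate_derivative_natDegree,
    coeff_X_pow_mul_iterate_derivative_natDegree, nsmul_eq_mul, nsmul_eq_mul]
  ring

theorem coeff_two_mul_natDegree_X_pow_four_mul {R : Type*} [CommRing R] (p : R[X]) :
    (X ^ 4 * (22 * p * derivative (derivative (derivative (derivative p))) +
        45 * derivative (derivative p) ^ 2 -
          66 * derivative p * derivative (derivative (derivative p)))).coeff (2 * p.natDegree) =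
      (22 * p.natDegree.descFactorial 4 + 45 * p.natDegree.descFactorial 2 ^ 2 -
        66 * p.natDegree * p.natDegree.descFactorial 3 : R) * p.leadingCoeff ^ 2 := by
  let Q (k : ℕ) : R[X] := X ^ k * derivative^[k] p
  have hQ : X ^ 4 * (22 * p * derivative (derivative (derivative (derivative p))) +
        45 * derivative (derivative p) ^ 2 -
          66 * derivative p * derivative (derivative (derivative p))) =
      22 * (Q 0 * Q 4) + 45 * (Q 2 * Q 2) - 66 * (Q 1 * Q 3) := by
    simp only [Q, Function.iterate_succ_apply', Function.iterate_zero_apply]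
    ring
  rw [hQ, coeff_sub, coeff_add, coeff_ofNat_mul, coeff_ofNat_mul, coeff_ofNat_mul]
  simp only [Q, coeff_two_mul_natDegree_X_pow_mul_iterate_derivative_mul, Nat.descFactorial_zero,
    Nat.descFactorial_one]
  push_cast
  ring

end Polynomial

theorem ODE_forces_degree (m : ℕ) (P : ℂ[X]) (hmonic : P.Monic) (hdeg : P.natDegree = m)
    (hODE : 22 * P * (derivative (derivative (derivative (derivative P)))) +
      45 * (derivative (derivative P))^2 -
        66 * (derivative P) * (derivative (derivative (derivative P))) = 0) :
    m = 0 ∨ m = 1 ∨ m = 11 ∨ m = 12 := by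
  have hcoeff := coeff_two_mul_natDegree_X_pow_four_mul P
  rw [hODE, mul_zero, coeff_zero, hmonic.leadingCoeff, one_pow, mul_one,
    Nat.cast_descFactorial_combination, hdeg] at hcoeff
  have hroots : (m * (m - 1) * (m - 11) * (m - 12) : ℤ) = 0 := by exact_mod_cast hcoeff.symm
  simp only [mul_eq_zero, sub_eq_zero] at hroots
  omega
end

section
/- There do not exist monic, pairwise coprime, squarefree polynomials V, M, P over C with deg V = 22, deg M = 33, deg P = 12 and V^3 = M^2 + k P^5 for some nonzero constant k. -/
/-!
Write `deg V = 2n`, `deg M = 3n`, `deg P = n + 1` (here `n = 11`).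
Differentiating `V³ = M² + k P⁵` and eliminating `k` gives
`V² (5P'V - 3PV') = M (5P'M - 2PM')`. As `V` and `M` are coprime, `V²` divides `5P'M - 2PM'`,
which has degree at most `deg V² = 4n`, so comparing coefficients of `X ^ 4n` yields
`5P'M - 2PM' = γ V²` and then `5P'V - 3PV' = γ M`, with `γ = 5 - n`. Differentiating the second
relation and combining it with the first gives `V (25P'² - γ²V) ≡ 0 mod P`, so `P ∣ 25P'² - γ²V`.
Differentiating this divisibility twice and reducing modulo `P` (using `gcd(P, P') = 1`) upgrades
it to `P² ∣ 44 (25P'² - γ²V) - 1200 P P''`. The right-hand side has degree at most `2n < deg P²`,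
so it vanishes, but its coefficient of `X ^ 2n` is `-144 n (n - 10)`. The exception `n = 10` is
the dodecahedron.
-/

open Polynomial

namespace Polynomial

variable {R : Type*} [CommRing R]

/-- Unlike `natDegree` and `leadingCoeff`, this is stable under cancellation of top terms. -/
def HasTopCoeff (p : R[X]) (d : ℕ) (c : R) : Prop :=
  p.natDegree ≤ d ∧ p.coeff d = c

theorem Monic.hasTopCoeff {p : R[X]} {d : ℕ} (hp : p.Monic) (hd : p.natDegree = d) :
    p.HasTopCoeff d 1 :=
  hd ▸ ⟨le_rfl, hp.coeff_natDegree⟩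

namespace HasTopCoeff

variable {p q : R[X]} {a b : ℕ} {c e : R}

theorem mul (hp : p.HasTopCoeff a c) (hq : q.HasTopCoeff b e) :
    (p * q).HasTopCoeff (a + b) (c * e) :=
  ⟨natDegree_mul_le_of_le hp.1 hq.1, by rw [coeff_mul_add_eq_of_natDegree_le hp.1 hq.1, hp.2, hq.2]⟩

theorem pow (hp : p.HasTopCoeff a c) (k : ℕ) : (p ^ k).HasTopCoeff (k * a) (c ^ k) :=
  ⟨natDegree_pow_le_of_le k hp.1, by rw [coeff_pow_of_natDegree_le hp.1, hp.2]⟩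

theorem sub (hp : p.HasTopCoeff a c) (hq : q.HasTopCoeff a e) : (p - q).HasTopCoeff a (c - e) :=
  ⟨(natDegree_sub_le_of_le hp.1 hq.1).trans (max_self a).le, by rw [coeff_sub, hp.2, hq.2]⟩

theorem C_mul (hp : p.HasTopCoeff a c) (r : R) : (C r * p).HasTopCoeff a (r * c) :=
  ⟨(natDegree_C_mul_le r p).trans hp.1, by rw [coeff_C_mul, hp.2]⟩

theorem derivative (hp : p.HasTopCoeff (a + 1) c) :
    (derivative p).HasTopCoeff a ((a + 1) * c) :=
  ⟨(natDegree_derivative_le p).trans (Nat.sub_le_of_le_add hp.1), by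
    rw [coeff_derivative, hp.2, mul_comm]⟩

theorem derivative_mul_sub_mul_derivative (hp : p.HasTopCoeff (a + 1) c)
    (hq : q.HasTopCoeff (b + 1) e) (r s : R) :
    (C r * Polynomial.derivative p * q - C s * p * Polynomial.derivative q).HasTopCoeff (a + b + 1)
      ((r * (a + 1) - s * (b + 1)) * c * e) := by
  have hpq := (hp.derivative.C_mul r).mul hq
  have hqp := (hp.C_mul s).mul hq.derivative
  rw [show a + (b + 1) = a + b + 1 by ring] at hpq
  rw [show a + 1 + b = a + b + 1 by ring] at hqp
  convert hpq.sub hqp using 1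
  ring

theorem eq_C_mul_of_dvd (hq : q.HasTopCoeff p.natDegree c) (hp : p.Monic) (hdvd : p ∣ q) :
    q = C c * p := by
  obtain ⟨l, rfl⟩ : ∃ l, q = C l * p :=
    ⟨_, eq_leadingCoeff_mul_of_monic_of_dvd_of_natDegree_le hp hdvd hq.1⟩
  rw [← hq.2, coeff_C_mul, hp.coeff_natDegree, mul_one]

end HasTopCoeff

end Polynomial

section Relations

variable {R : Type*} [CommRing R] {V M P : R[X]}

theorem sq_mul_eq_mul_of_cube_eq_sq_add_C_mul_pow_five {k : R}
    (h : V ^ 3 = M ^ 2 + C k * P ^ 5) :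
    V ^ 2 * (5 * derivative P * V - 3 * P * derivative V) =
      M * (5 * derivative P * M - 2 * P * derivative M) := by
  have hd := congrArg derivative h
  simp only [derivative_pow, derivative_add, derivative_mul, derivative_C, zero_mul, zero_add,
    Nat.cast_ofNat, map_ofNat] at hd
  linear_combination (5 * derivative P) * h - P * hd

theorem mul_eq_mul_of_eq_C_mul_of_eq_C_mul_sq {c : R}
    (h₁ : 5 * derivative P * V - 3 * P * derivative V = C c * M)
    (h₂ : 5 * derivative P * M - 2 * P * derivative M = C c * V ^ 2) :
    V * (25 * derivative P ^ 2 - C (c ^ 2) * V) =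
      P * (19 * derivative P * derivative V + 10 * derivative (derivative P) * V
        - 6 * P * derivative (derivative V)) := by
  have hd := congrArg derivative h₁
  simp only [derivative_sub, derivative_mul, derivative_ofNat, derivative_C, zero_mul,
    zero_add] at hd
  rw [C_pow]
  linear_combination 5 * derivative P * h₁ - 2 * P * hd + C c * h₂

theorem dvd_derivative_sq_mul_of_mul_eq {B : R[X]} {c : R}
    (hB : 25 * derivative P ^ 2 - C (c ^ 2) * V = P * B)
    (hVB : V * B = 19 * derivative P * derivative V + 10 * derivative (derivative P) * V
        - 6 * P * derivative (derivative V)) :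
    P ∣ derivative P ^ 2 * (44 * B - 1200 * derivative (derivative P)) := by
  have hB' := congrArg derivative hB
  simp only [derivative_sub, derivative_mul, derivative_pow, derivative_ofNat, derivative_C,
    zero_mul, zero_add, Nat.cast_ofNat, map_ofNat, Nat.reduceSub, pow_one] at hB'
  have hB'' := congrArg derivative hB'
  simp only [derivative_sub, derivative_add, derivative_mul, derivative_ofNat, derivative_C,
    zero_mul, zero_add] at hB''
  refine ⟨B ^ 2 - 7 * derivative P * derivative B - 4 * derivative (derivative P) * B
    - 300 * derivative (derivative P) ^ 2
    - 300 * derivative P * derivative (derivative (derivative P))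
    + 6 * P * derivative (derivative B), ?_⟩
  linear_combination C (c ^ 2) * hVB + (B - 10 * derivative (derivative P)) * hB
    - 19 * derivative P * hB' + 6 * P * hB''

end Relations

theorem sq_dvd_of_mul_eq_mul {K : Type*} [Field K] [PerfectField K] {V P : K[X]} {c : K}
    (hP : Squarefree P) (hVP : IsCoprime V P)
    (h : V * (25 * derivative P ^ 2 - C (c ^ 2) * V) =
      P * (19 * derivative P * derivative V + 10 * derivative (derivative P) * V
        - 6 * P * derivative (derivative V))) :
    P ^ 2 ∣
      44 * (25 * derivative P ^ 2 - C (c ^ 2) * V) - 1200 * P * derivative (derivative P) := by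
  obtain ⟨B, hB⟩ := hVP.symm.dvd_of_dvd_mul_left ⟨_, h⟩
  rw [hB, mul_left_comm] at h
  have hVB := mul_left_cancel₀ hP.ne_zero h
  have hcop : IsCoprime P (derivative P ^ 2) :=
    (PerfectField.separable_iff_squarefree.mpr hP).pow_right
  have hdvd := hcop.dvd_of_dvd_mul_left (dvd_derivative_sq_mul_of_mul_eq hB hVB)
  rw [hB, sq, show 44 * (P * B) - 1200 * P * derivative (derivative P) =
    P * (44 * B - 1200 * derivative (derivative P)) by ring]
  exact mul_dvd_mul_left P hdvd

theorem sub_eq_C_mul_of_cube_eq_sq_add_C_mul_pow_five {R : Type*} [CommRing R] [IsDomain R]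
    {n : ℕ} (hn : n ≠ 0) {V M P : R[X]} (hV : V.Monic) (hM : M.Monic) (hP : P.Monic)
    (hVM : IsCoprime V M) (hdV : V.natDegree = 2 * n) (hdM : M.natDegree = 3 * n)
    (hdP : P.natDegree = n + 1) {k : R} (h : V ^ 3 = M ^ 2 + C k * P ^ 5) :
    5 * derivative P * M - 2 * P * derivative M = C (5 - n : R) * V ^ 2 ∧
      5 * derivative P * V - 3 * P * derivative V = C (5 - n : R) * M := by
  have hrel := sq_mul_eq_mul_of_cube_eq_sq_add_C_mul_pow_five h
  have hW : 5 * derivative P * M - 2 * P * derivative M = C (5 - n : R) * V ^ 2 := by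
    obtain ⟨m, rfl⟩ := Nat.exists_eq_add_one_of_ne_zero hn
    refine HasTopCoeff.eq_C_mul_of_dvd ?_ (hV.pow 2)
      (hVM.pow_left.dvd_of_dvd_mul_left ⟨_, hrel.symm⟩)
    have hMt : M.HasTopCoeff (3 * m + 2 + 1) 1 := hM.hasTopCoeff (by rw [hdM]; ring)
    convert (hP.hasTopCoeff hdP).derivative_mul_sub_mul_derivative hMt 5 2 using 1
    · simp only [map_ofNat]
    · rw [hV.natDegree_pow, hdV]; ring
    · push_cast; ring
  refine ⟨hW, mul_left_cancel₀ (pow_ne_zero 2 hV.ne_zero) ?_⟩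
  rw [hrel, hW]; ring

theorem cube_ne_sq_add_C_mul_pow_five {K : Type*} [Field K] [CharZero K] {n : ℕ} (hn : n ≠ 0)
    (hn10 : n ≠ 10) {V M P : K[X]} (hV : V.Monic) (hM : M.Monic) (hP : P.Monic)
    (hVM : IsCoprime V M) (hVP : IsCoprime V P) (hPsf : Squarefree P) (hdV : V.natDegree = 2 * n)
    (hdM : M.natDegree = 3 * n) (hdP : P.natDegree = n + 1) (k : K) :
    V ^ 3 ≠ M ^ 2 + C k * P ^ 5 := by
  intro h
  obtain ⟨hW, h₁⟩ := sub_eq_C_mul_of_cube_eq_sq_add_C_mul_pow_five hn hV hM hP hVM hdV hdM hdP h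
  have hdvd := sq_dvd_of_mul_eq_mul hPsf hVP (mul_eq_mul_of_eq_C_mul_of_eq_C_mul_sq h₁ hW)
  have htop : (44 * (25 * derivative P ^ 2 - C ((5 - n : K) ^ 2) * V)
      - 1200 * P * derivative (derivative P)).HasTopCoeff (2 * n) (-144 * n * (n - 10)) := by
    obtain ⟨m, rfl⟩ := Nat.exists_eq_add_one_of_ne_zero hn
    have hPt := hP.hasTopCoeff hdP
    have hP' := hPt.derivative
    have hPP'' := (hPt.C_mul 1200).mul hP'.derivative
    rw [show m + 1 + 1 + m = 2 * (m + 1) by ring] at hPP''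
    have hV' := (hV.hasTopCoeff hdV).C_mul ((5 - ((m + 1 : ℕ) : K)) ^ 2)
    convert (((hP'.pow 2).C_mul 25).sub hV').C_mul 44 |>.sub hPP'' using 1
    · simp only [map_ofNat]
    · push_cast; ring
  have hzero := eq_zero_of_dvd_of_natDegree_lt hdvd
    (htop.1.trans_lt (by rw [hP.natDegree_pow, hdP]; omega))
  have hcoeff := htop.2
  rw [hzero, coeff_zero] at hcoeff
  have hne : (n : K) * (n - 10) ≠ 0 :=
    mul_ne_zero (Nat.cast_ne_zero.2 hn) (sub_ne_zero.2 (by exact_mod_cast hn10))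
  exact hne (by linear_combination (1 / 144 : K) * hcoeff)

theorem no_fullerene_C22 :
    ¬ ∃ (V M P : ℂ[X]) (k : ℂ), k ≠ 0 ∧
      V.Monic ∧ M.Monic ∧ P.Monic ∧
      IsCoprime V M ∧ IsCoprime V P ∧ IsCoprime M P ∧
      Squarefree V ∧ Squarefree M ∧ Squarefree P ∧
      V.natDegree = 22 ∧ M.natDegree = 33 ∧ P.natDegree = 12 ∧
      V^3 = M^2 + C k * P^5 := by
  rintro ⟨V, M, P, k, -, hV, hM, hP, hVM, hVP, -, -, -, hPsf, hdV, hdM, hdP, h⟩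
  exact cube_ne_sq_add_C_mul_pow_five (n := 11) (by norm_num) (by norm_num) hV hM hP hVM hVP hPsf
    hdV hdM hdP k h
end

section
/- The generalized Fermat equation X^p + Y^q = Z^r has no solution in pairwise coprime non-constant polynomials X, Y, Z over C when 1/p + 1/q + 1/r <= 1 (p, q, r >= 2 integers). -/
open Polynomial

/-!
Unless all derivatives vanish, which over `ℂ` makes the polynomials constant, Mason–Stothers
bounds each of `p deg X`, `q deg Y`, `r deg Z` by `deg X + deg Y + deg Z - 1`, and
weighting these bounds by `qr`, `rp`, `pq` contradicts `qr + rp + pq ≤ pqr`, which is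
`1/p + 1/q + 1/r ≤ 1` with denominators cleared. This is Mathlib's `Polynomial.flt_catalan`.
-/

theorem one_div_add_one_div_add_one_div_le_one_iff {K : Type*} [Field K] [LinearOrder K]
    [IsStrictOrderedRing K] {p q r : ℕ} (hp : p ≠ 0) (hq : q ≠ 0) (hr : r ≠ 0) :
    (1 : K) / p + 1 / q + 1 / r ≤ 1 ↔ q * r + r * p + p * q ≤ p * q * r := by
  have hp' : (0 : K) < p := by positivity
  have hq' : (0 : K) < q := by positivity
  have hr' : (0 : K) < r := by positivity
  have hcleared : (1 : K) / p + 1 / q + 1 / r = (q * r + r * p + p * q) / (p * q * r) := by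
    field_simp
  rw [hcleared, div_le_one (by positivity)]
  exact_mod_cast Iff.rfl

theorem generalized_fermat_polynomials_general (p q r : ℕ) (hp : 2 ≤ p) (hq : 2 ≤ q) (hr : 2 ≤ r)
    (hpqr : (1 : ℚ) / p + 1 / q + 1 / r ≤ 1)
    (X Y Z : ℂ[X]) (hX : 0 < X.natDegree) (hY : 0 < Y.natDegree) (hZ : 0 < Z.natDegree)
    (hXY : IsCoprime X Y) :
    X^p + Y^q ≠ Z^r := by
  intro heq
  have hp0 : p ≠ 0 := by omega
  have hq0 : q ≠ 0 := by omega
  have hr0 : r ≠ 0 := by omega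
  have hineq := (one_div_add_one_div_add_one_div_le_one_iff hp0 hq0 hr0).mp hpqr
  have hsum : C 1 * X ^ p + C 1 * Y ^ q + C (-1) * Z ^ r = 0 := by
    simp [heq]
  obtain ⟨hXconst, -, -⟩ := flt_catalan hp0 hq0 hr0 hineq (by exact_mod_cast hp0)
    (by exact_mod_cast hq0) (by exact_mod_cast hr0) (ne_zero_of_natDegree_gt hX)
    (ne_zero_of_natDegree_gt hY) (ne_zero_of_natDegree_gt hZ) hXY one_ne_zero one_ne_zero
    (neg_ne_zero.mpr one_ne_zero) hsum
  omega

theorem generalized_fermat_polynomials (p q r : ℕ) (hp : 2 ≤ p) (hq : 2 ≤ q) (hr : 2 ≤ r)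
    (hpqr : (1 : ℚ) / p + 1 / q + 1 / r ≤ 1)
    (X Y Z : ℂ[X]) (hX : 0 < X.natDegree) (hY : 0 < Y.natDegree) (hZ : 0 < Z.natDegree)
    (hXY : IsCoprime X Y) (hXZ : IsCoprime X Z) (hYZ : IsCoprime Y Z) :
    X^p + Y^q ≠ Z^r :=
  generalized_fermat_polynomials_general p q r hp hq hr hpqr X Y Z hX hY hZ hXY
end

section
/- The Fermat equation X^n + Y^n = Z^n has no solution in pairwise coprime non-constant polynomials X, Y, Z over C for n >= 3. -/
open Polynomial

theorem fermat_polynomials_general (n : ℕ) (hn : 3 ≤ n)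
    (X Y Z : ℂ[X]) (hX : 0 < X.natDegree) (hY : 0 < Y.natDegree) (hZ : 0 < Z.natDegree)
    (hXY : IsCoprime X Y) :
    X^n + Y^n ≠ Z^n := by
  intro h
  have hn0 : (n : ℂ) ≠ 0 := Nat.cast_ne_zero.mpr (by omega)
  exact hX.ne' (Polynomial.flt hn hn0 (ne_zero_of_natDegree_gt hX)
    (ne_zero_of_natDegree_gt hY) (ne_zero_of_natDegree_gt hZ) hXY h).1

theorem fermat_polynomials (n : ℕ) (hn : 3 ≤ n)
    (X Y Z : ℂ[X]) (hX : 0 < X.natDegree) (hY : 0 < Y.natDegree) (hZ : 0 < Z.natDegree)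
    (hXY : IsCoprime X Y) (hXZ : IsCoprime X Z) (hYZ : IsCoprime Y Z) :
    X^n + Y^n ≠ Z^n :=
  fermat_polynomials_general n hn X Y Z hX hY hZ hXY
end

section
/- The quartic polynomial Z^4 + 228 Z^3 + 494 Z^2 - 228 Z + 1 has four distinct real roots, exactly two of which are positive and two negative. -/
theorem barrel_quartic_roots :
    ∃ a b c d : ℝ, a < b ∧ b < 0 ∧ 0 < c ∧ c < d ∧
      ∀ t : ℝ, t^4 + 228 * t^3 + 494 * t^2 - 228 * t + 1 = 0 ↔
        (t = a ∨ t = b ∨ t = c ∨ t = d) := by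
  have hs : (Real.sqrt 5)^2 = 5 := Real.sq_sqrt (by norm_num)
  have hsnn : 0 ≤ Real.sqrt 5 := Real.sqrt_nonneg 5
  set s : ℝ := Real.sqrt 5 with hsdef
  have hs_lb : 2.2 < s := by nlinarith
  have hs_ub : s < 2.3 := by nlinarith
  set A1 : ℝ := 114 + 50*s with hA1
  set A2 : ℝ := 114 - 50*s with hA2
  have hA1pos : 0 < A1 := by nlinarith
  have hA2pos : 0 < A2 := by nlinarith
  have hD1 : (Real.sqrt (A1^2+4))^2 = A1^2+4 := Real.sq_sqrt (by positivity)
  have hD2 : (Real.sqrt (A2^2+4))^2 = A2^2+4 := Real.sq_sqrt (by positivity)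
  have hD1pos : 0 < Real.sqrt (A1^2+4) := Real.sqrt_pos.mpr (by positivity)
  have hD2pos : 0 < Real.sqrt (A2^2+4) := Real.sqrt_pos.mpr (by positivity)
  set D1 : ℝ := Real.sqrt (A1^2+4) with hD1def
  set D2 : ℝ := Real.sqrt (A2^2+4) with hD2def
  have hA12 : A2 < A1 := by nlinarith
  have hD21 : D2 < D1 := by nlinarith
  refine ⟨(-A1 - D1)/2, (-A2 - D2)/2, (-A1 + D1)/2, (-A2 + D2)/2, ?_, ?_, ?_, ?_, ?_⟩
  · nlinarith
  · nlinarith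
  · nlinarith
  · have e1 : (D1-A1)*(D1+A1) = 4 := by linear_combination hD1
    have e2 : (D2-A2)*(D2+A2) = 4 := by linear_combination hD2
    nlinarith [e1, e2, mul_pos (show (0:ℝ) < D1+A1 by linarith) (show (0:ℝ) < D2+A2 by linarith)]
  · intro t
    have key : t^4 + 228 * t^3 + 494 * t^2 - 228 * t + 1
        = (t - (-A1 - D1)/2) * (t - (-A1 + D1)/2)
          * ((t - (-A2 - D2)/2) * (t - (-A2 + D2)/2)) := by
      have h1 : (t - (-A1 - D1)/2) * (t - (-A1 + D1)/2) = t^2 + A1*t - 1 := by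
        linear_combination (-1/4 : ℝ) * hD1
      have h2 : (t - (-A2 - D2)/2) * (t - (-A2 + D2)/2) = t^2 + A2*t - 1 := by
        linear_combination (-1/4 : ℝ) * hD2
      rw [h1, h2, hA1, hA2]
      linear_combination (2500 * t^2) * hs
    rw [key]
    constructor
    · intro h
      rcases mul_eq_zero.mp h with h' | h'
      · rcases mul_eq_zero.mp h' with h'' | h''
        · exact Or.inl (sub_eq_zero.mp h'')
        · exact Or.inr (Or.inr (Or.inl (sub_eq_zero.mp h'')))
      · rcases mul_eq_zero.mp h' with h'' | h''
        · exact Or.inr (Or.inl (sub_eq_zero.mp h''))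
        · exact Or.inr (Or.inr (Or.inr (sub_eq_zero.mp h'')))
    · rintro (rfl|rfl|rfl|rfl) <;> ring
end

section
/- The substitution z -> z^5 transforms the identity V(z)^3 = M(z)^2 + 1728 z (z^2 - 11 z - 1)^5 with V(z) = z^4 + 228 z^3 + 494 z^2 - 228 z + 1 and M(z) = (z^2+1)(z^4 - 522 z^3 - 10006 z^2 + 522 z + 1) into the dodecahedron identity; equivalently, the identity (z^4 + 228 z^3 + 494 z^2 - 228 z + 1)^3 = ((z^2 + 1)(z^4 - 522 z^3 - 10006 z^2 + 522 z + 1))^2 + 1728 z (z^2 - 11 z - 1)^5 holds in Z[z]. -/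
open Polynomial

theorem beta12_identity :
    ((X : ℤ[X])^4 + 228 * X^3 + 494 * X^2 - 228 * X + 1)^3 =
      ((X^2 + 1) * (X^4 - 522 * X^3 - 10006 * X^2 + 522 * X + 1))^2 +
        1728 * X * (X^2 - 11 * X - 1)^5 := by ring
end

section
/- If V, P in C[z] are coprime, P is squarefree, and there exists R in C[z] with V R = 6 V'' P - 19 V' P' and P R = s^2 V + 10 P P'' - 25 (P')^2 for a nonzero constant s, and deg R < deg P, then 11 R + 190 P'' = 0 and 22 P P'''' + 45 (P'')^2 - 66 P' P''' = 0. -/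
/-!
Differentiating the second relation twice expresses `s² V'` and `s² V''` through `P` and `R`;
substituting them into `s²` times the first relation eliminates `V` and leaves
`4 P'² (11 R + 190 P'') = P E` for an explicit differential polynomial `E` in `P` and `R`.
As `P` is separable, it is coprime to `P'²`, so it divides `11 R + 190 P''`, a polynomial of
smaller degree, which must therefore vanish. Using `11 R = -190 P''` and its derivatives, `E`
becomes a multiple of the fourth-order expression.
-/

open Polynomial

namespace Polynomial

section CommRing

variable {A : Type*} [CommRing A]

noncomputable def eliminationCofactor (P R : A[X]) : A[X] :=
  -(R ^ 2) + 16 * derivative (derivative P) * R + 6 * P * derivative (derivative R)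
    - 7 * derivative P * derivative R + 240 * derivative (derivative P) ^ 2
    + 370 * derivative P * derivative (derivative (derivative P))
    - 60 * P * derivative (derivative (derivative (derivative P)))

theorem derivative_sq_mul_eq_mul_eliminationCofactor {V P R : A[X]} {c : A}
    (h1 : V * R = 6 * derivative (derivative V) * P - 19 * derivative V * derivative P)
    (h2 : P * R = C c * V + 10 * P * derivative (derivative P) - 25 * derivative P ^ 2) :
    derivative P ^ 2 * (4 * (11 * R + 190 * derivative (derivative P))) =
      P * eliminationCofactor P R := by
  have hV' : C c * derivative V = P * derivative R + derivative P * R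
      + 40 * derivative P * derivative (derivative P)
      - 10 * P * derivative (derivative (derivative P)) := by
    have h := congrArg derivative h2
    simp only [derivative_mul, derivative_add, derivative_sub, derivative_C,
      derivative_ofNat, derivative_pow, Nat.cast_ofNat, map_ofNat] at h
    linear_combination -h
  have hV'' : C c * derivative (derivative V) = P * derivative (derivative R)
      + 2 * derivative P * derivative R + derivative (derivative P) * R
      + 40 * derivative (derivative P) ^ 2
      + 30 * derivative P * derivative (derivative (derivative P))
      - 10 * P * derivative (derivative (derivative (derivative P))) := by
    have h := congrArg derivative hV'
    simp only [derivative_mul, derivative_add, derivative_sub, derivative_C,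
      derivative_ofNat] at h
    linear_combination h
  unfold eliminationCofactor
  linear_combination C c * h1 + R * h2 + 6 * P * hV'' - 19 * derivative P * hV'

theorem mul_ode_eq_neg_mul_eliminationCofactor {P R : A[X]}
    (hR : 11 * R + 190 * derivative (derivative P) = 0) :
    900 * (22 * P * derivative (derivative (derivative (derivative P)))
      + 45 * derivative (derivative P) ^ 2
      - 66 * derivative P * derivative (derivative (derivative P))) =
      -121 * eliminationCofactor P R := by
  have hR' : 11 * derivative R + 190 * derivative (derivative (derivative P)) = 0 := by
    simpa only [derivative_add, derivative_mul, derivative_ofNat, zero_mul, zero_add,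
      derivative_zero] using congrArg derivative hR
  have hR'' : 11 * derivative (derivative R)
      + 190 * derivative (derivative (derivative (derivative P))) = 0 := by
    simpa only [derivative_add, derivative_mul, derivative_ofNat, zero_mul, zero_add,
      derivative_zero] using congrArg derivative hR'
  unfold eliminationCofactor
  linear_combination (-11 * R + 366 * derivative (derivative P)) * hR
    - 77 * derivative P * hR' + 66 * P * hR''

end CommRing

theorem degree_derivative_derivative_lt {A : Type*} [Semiring A] {p : A[X]} (hp : p ≠ 0) :
    (derivative (derivative p)).degree < p.degree :=
  degree_derivative_le.trans_lt (degree_derivative_lt hp)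

theorem Separable.eq_zero_of_dvd_derivative_pow_mul {A : Type*} [CommRing A] [NoZeroDivisors A]
    {p q : A[X]} {n : ℕ} (hp : p.Separable) (hdvd : p ∣ derivative p ^ n * q)
    (hq : q.degree < p.degree) : q = 0 :=
  eq_zero_of_dvd_of_degree_lt (hp.pow_right.dvd_of_dvd_mul_left hdvd) hq

end Polynomial

theorem elimination_yields_ODE_general (V P R : ℂ[X]) (s : ℂ)
    (hPsf : Squarefree P)
    (h1 : V * R = 6 * (derivative (derivative V)) * P - 19 * (derivative V) * (derivative P))
    (h2 : P * R = C (s^2) * V + 10 * P * (derivative (derivative P)) - 25 * (derivative P)^2)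
    (hdeg : R.degree < P.degree) :
    11 * R + 190 * (derivative (derivative P)) = 0 ∧
      22 * P * (derivative (derivative (derivative (derivative P)))) +
        45 * (derivative (derivative P))^2 -
          66 * (derivative P) * (derivative (derivative (derivative P))) = 0 := by
  have hP : P ≠ 0 := ne_zero_of_degree_gt hdeg
  have hkey := derivative_sq_mul_eq_mul_eliminationCofactor h1 h2
  have hdegQ : (4 * (11 * R + 190 * derivative (derivative P))).degree < P.degree := by
    have hR : (4 * (11 * R)).degree ≤ R.degree := by compute_degree
    have hP'' : (4 * (190 * derivative (derivative P))).degree ≤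
        (derivative (derivative P)).degree := by compute_degree
    rw [mul_add]
    exact (degree_add_le _ _).trans_lt
      (max_lt (hR.trans_lt hdeg) (hP''.trans_lt (degree_derivative_derivative_lt hP)))
  have hQ : 4 * (11 * R + 190 * derivative (derivative P)) = 0 :=
    (PerfectField.separable_iff_squarefree.mpr hPsf).eq_zero_of_dvd_derivative_pow_mul
      (Dvd.intro _ hkey.symm) hdegQ
  have hR : 11 * R + 190 * derivative (derivative P) = 0 :=
    (mul_eq_zero.mp hQ).resolve_left (by norm_num)
  have hE : eliminationCofactor P R = 0 := by
    rw [hQ, mul_zero, eq_comm, mul_eq_zero] at hkey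
    exact hkey.resolve_left hP
  refine ⟨hR, (mul_eq_zero.mp ?_).resolve_left (by norm_num : (900 : ℂ[X]) ≠ 0)⟩
  rw [mul_ode_eq_neg_mul_eliminationCofactor hR, hE, mul_zero]

theorem elimination_yields_ODE (V P R : ℂ[X]) (s : ℂ) (hs : s ≠ 0)
    (hVP : IsCoprime V P) (hPsf : Squarefree P)
    (h1 : V * R = 6 * (derivative (derivative V)) * P - 19 * (derivative V) * (derivative P))
    (h2 : P * R = C (s^2) * V + 10 * P * (derivative (derivative P)) - 25 * (derivative P)^2)
    (hdeg : R.degree < P.degree) :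
    11 * R + 190 * (derivative (derivative P)) = 0 ∧
      22 * P * (derivative (derivative (derivative (derivative P)))) +
        45 * (derivative (derivative P))^2 -
          66 * (derivative P) * (derivative (derivative (derivative P))) = 0 :=
  elimination_yields_ODE_general V P R s hPsf h1 h2 hdeg
end
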